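/- Let k be a field, A a Z-graded commutative k-algebra, and R any commutative k-algebra. Grade R[t] with R in degree 0 and deg t = 1, and grade R[s] with R in degree 0 and deg s = -1. Then the set of pairs (phi_plus, phi_minus), where phi_plus : A -> R[t] and phi_minus : A -> R[s] are graded k-algebra homomorphisms whose compositions with the evaluations t |-> 1 and s |-> 1 yield the same k-algebra homomorphism A -> R, is in natural bijection with the set of k-algebra homomorphisms A^0 -> R, where A^0 is the quotient of A by the ideal generated by all homogeneous elements of nonzero degree. The bijection sends (phi_plus, phi_minus) to the common evaluation A -> R (which automatically kills all homogeneous elements of nonzero degree). -/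

import Mathlib

/-- `φ : A →ₐ[k] R[t]` is graded, where `R[t]` has `R` in degree `0` and `deg t = 1`. -/
def IsGradedToPoly {k A R : Type*} [CommSemiring k] [CommRing A] [Algebra k A]
    [CommRing R] [Algebra k R] (𝒜 : ℤ → Submodule k A) (φ : A →ₐ[k] Polynomial R) : Prop :=
  ∀ n : ℤ, ∀ a ∈ 𝒜 n,
    if 0 ≤ n then ∃ r : R, φ a = Polynomial.C r * Polynomial.X ^ n.toNat
    else φ a = 0

/-- `φ : A →ₐ[k] R[s]` is graded, where `R[s]` has `R` in degree `0` and `deg s = -1`. -/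
def IsGradedToPolyNeg {k A R : Type*} [CommSemiring k] [CommRing A] [Algebra k A]
    [CommRing R] [Algebra k R] (𝒜 : ℤ → Submodule k A) (φ : A →ₐ[k] Polynomial R) : Prop :=
  ∀ n : ℤ, ∀ a ∈ 𝒜 n,
    if n ≤ 0 then ∃ r : R, φ a = Polynomial.C r * Polynomial.X ^ (-n).toNat
    else φ a = 0

/-- Composition with the evaluation at `1`, as a `k`-algebra homomorphism. -/
noncomputable def evalOne (k R : Type*) [CommSemiring k] [CommRing R] [Algebra k R] :
    Polynomial R →ₐ[k] R :=
  (Polynomial.aeval (1 : R)).restrictScalars k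

/-- The ideal of `A` generated by all homogeneous elements of nonzero degree. -/
def nonzeroDegIdeal {k A : Type*} [CommSemiring k] [CommRing A] [Algebra k A]
    (𝒜 : ℤ → Submodule k A) : Ideal A :=
  Ideal.span {a : A | ∃ n : ℤ, n ≠ 0 ∧ a ∈ 𝒜 n}

/-!
A graded map `φ⁺ : A → R[t]` kills `A_n` for `n < 0`, and `φ⁻ : A → R[s]` kills `A_n` for `n > 0`,
so their common evaluation `ψ` at `1` kills every homogeneous element of nonzero degree, i.e.
factors (uniquely) through `A⁰`. Conversely, once `ψ` kills the nonzero degrees, a graded `φ`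
lifting `ψ` sends `a ∈ A_n` to `C (ψ a) * X^|n|`, which is `0` for `n ≠ 0` and `C (ψ a)` for
`n = 0`; hence `φ⁺ = φ⁻ = C ∘ ψ` is the only possible pair, and it is graded.
-/

open Polynomial

section Graded

variable {k A R : Type*} [CommSemiring k] [CommRing A] [Algebra k A] [CommRing R] [Algebra k R]
  {𝒜 : ℤ → Submodule k A}

theorem AlgHom.ext_of_decomposition [DirectSum.Decomposition 𝒜] {B : Type*} [Semiring B]
    [Algebra k B] {f g : A →ₐ[k] B} (h : ∀ n, ∀ a ∈ 𝒜 n, f a = g a) : f = g :=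
  AlgHom.toLinearMap_injective <|
    DirectSum.decompose_lhom_ext 𝒜 fun n => LinearMap.ext fun a => h n a a.2

@[simp]
theorem evalOne_C_mul_X_pow (r : R) (m : ℕ) : evalOne k R (C r * X ^ m) = r := by
  simp [evalOne]

theorem IsGradedToPoly.apply_eq_zero_of_neg {φ : A →ₐ[k] R[X]} (hφ : IsGradedToPoly 𝒜 φ)
    {n : ℤ} (hn : n < 0) {a : A} (ha : a ∈ 𝒜 n) : φ a = 0 := by
  simpa [not_le.mpr hn] using hφ n a ha

theorem IsGradedToPolyNeg.apply_eq_zero_of_pos {φ : A →ₐ[k] R[X]} (hφ : IsGradedToPolyNeg 𝒜 φ)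
    {n : ℤ} (hn : 0 < n) {a : A} (ha : a ∈ 𝒜 n) : φ a = 0 := by
  simpa [not_le.mpr hn] using hφ n a ha

theorem IsGradedToPoly.exists_C_mul_X_pow {φ : A →ₐ[k] R[X]} (hφ : IsGradedToPoly 𝒜 φ)
    {n : ℤ} {a : A} (ha : a ∈ 𝒜 n) : ∃ r, φ a = C r * X ^ n.toNat := by
  by_cases hn : 0 ≤ n
  · simpa [hn] using hφ n a ha
  · exact ⟨0, by simp [hφ.apply_eq_zero_of_neg (not_le.mp hn) ha]⟩

theorem IsGradedToPolyNeg.exists_C_mul_X_pow {φ : A →ₐ[k] R[X]} (hφ : IsGradedToPolyNeg 𝒜 φ)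
    {n : ℤ} {a : A} (ha : a ∈ 𝒜 n) : ∃ r, φ a = C r * X ^ (-n).toNat := by
  by_cases hn : n ≤ 0
  · simpa [hn] using hφ n a ha
  · exact ⟨0, by simp [hφ.apply_eq_zero_of_pos (not_le.mp hn) ha]⟩

noncomputable def constLift (ψ : A →ₐ[k] R) : A →ₐ[k] R[X] :=
  ((CAlgHom (R := R) (A := R)).restrictScalars k).comp ψ

@[simp]
theorem constLift_apply (ψ : A →ₐ[k] R) (a : A) : constLift ψ a = C (ψ a) := rfl

@[simp]
theorem evalOne_comp_constLift (ψ : A →ₐ[k] R) : (evalOne k R).comp (constLift ψ) = ψ := by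
  ext a
  simp [evalOne]

variable {ψ : A →ₐ[k] R}

theorem isGradedToPoly_constLift (hψ : ∀ n : ℤ, n ≠ 0 → ∀ a ∈ 𝒜 n, ψ a = 0) :
    IsGradedToPoly 𝒜 (constLift ψ) := by
  intro n a ha
  rcases eq_or_ne n 0 with rfl | hn
  · simp
  · simp only [constLift_apply, hψ n hn a ha, map_zero]
    split_ifs
    exact ⟨0, by simp⟩

theorem isGradedToPolyNeg_constLift (hψ : ∀ n : ℤ, n ≠ 0 → ∀ a ∈ 𝒜 n, ψ a = 0) :
    IsGradedToPolyNeg 𝒜 (constLift ψ) := by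
  intro n a ha
  rcases eq_or_ne n 0 with rfl | hn
  · simp
  · simp only [constLift_apply, hψ n hn a ha, map_zero]
    split_ifs
    exact ⟨0, by simp⟩

-- `e = Int.toNat` covers `R[t]`, and `e n = (-n).toNat` covers `R[s]`.
theorem eq_constLift_of_monomial [DirectSum.Decomposition 𝒜] {φ : A →ₐ[k] R[X]} {e : ℤ → ℕ}
    (he : e 0 = 0) (hφ : ∀ n, ∀ a ∈ 𝒜 n, ∃ r, φ a = C r * X ^ e n)
    (hφψ : (evalOne k R).comp φ = ψ) (hψ : ∀ n : ℤ, n ≠ 0 → ∀ a ∈ 𝒜 n, ψ a = 0) :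
    φ = constLift ψ := by
  refine AlgHom.ext_of_decomposition (𝒜 := 𝒜) fun n a ha => ?_
  obtain ⟨r, hr⟩ := hφ n a ha
  have hψa : ψ a = r := by rw [← hφψ, AlgHom.comp_apply, hr, evalOne_C_mul_X_pow]
  rcases eq_or_ne n 0 with rfl | hn
  · simp [hr, hψa, he]
  · simp [hr, ← hψa, hψ n hn a ha]

theorem evalOne_comp_eq_zero_of_ne_zero {φp φm : A →ₐ[k] R[X]} (hp : IsGradedToPoly 𝒜 φp)
    (hm : IsGradedToPolyNeg 𝒜 φm) (hpψ : (evalOne k R).comp φp = ψ)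
    (hmψ : (evalOne k R).comp φm = ψ) {n : ℤ} (hn : n ≠ 0) {a : A} (ha : a ∈ 𝒜 n) :
    ψ a = 0 := by
  rcases hn.lt_or_gt with hn | hn
  · rw [← hpψ, AlgHom.comp_apply, hp.apply_eq_zero_of_neg hn ha, map_zero]
  · rw [← hmψ, AlgHom.comp_apply, hm.apply_eq_zero_of_pos hn ha, map_zero]

theorem nonzeroDegIdeal_le_ker_iff :
    nonzeroDegIdeal 𝒜 ≤ RingHom.ker ψ ↔ ∀ n : ℤ, n ≠ 0 → ∀ a ∈ 𝒜 n, ψ a = 0 := by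
  rw [nonzeroDegIdeal, Ideal.span_le]
  exact ⟨fun h n hn a ha => h ⟨n, hn, ha⟩, fun h a ⟨n, hn, ha⟩ => h n hn a ha⟩

end Graded

theorem Ideal.Quotient.existsUnique_comp_mkₐ_iff {k A B : Type*} [CommSemiring k] [CommRing A]
    [Algebra k A] [Semiring B] [Algebra k B] (I : Ideal A) (f : A →ₐ[k] B) :
    (∃! g : (A ⧸ I) →ₐ[k] B, g.comp (Ideal.Quotient.mkₐ k I) = f) ↔ I ≤ RingHom.ker f := by
  refine ⟨fun ⟨g, hg, _⟩ a ha => ?_, fun hI => ?_⟩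
  · rw [RingHom.mem_ker, ← hg, AlgHom.comp_apply, Ideal.Quotient.mkₐ_eq_mk,
      Ideal.Quotient.eq_zero_iff_mem.mpr ha, map_zero]
  · refine ⟨Ideal.Quotient.liftₐ I f hI, Ideal.Quotient.liftₐ_comp I f hI, fun g hg => ?_⟩
    exact Ideal.Quotient.algHom_ext k (hg.trans (Ideal.Quotient.liftₐ_comp I f hI).symm)

/-- Let `k` be a field, `A` a `ℤ`-graded commutative `k`-algebra, `R` a
commutative `k`-algebra.  Pairs `(φ⁺, φ⁻)` of graded homomorphisms `φ⁺ : A → R[t]`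
(`deg t = 1`) and `φ⁻ : A → R[s]` (`deg s = -1`) with the same evaluation `ψ : A → R` at
`t = 1`, `s = 1` correspond bijectively (via `ψ`) to `k`-algebra homomorphisms `A⁰ → R`;
in particular the common evaluation automatically kills all homogeneous elements of
nonzero degree. -/
theorem stmt_2 {k A R : Type*} [Field k] [CommRing A] [Algebra k A]
    (𝒜 : ℤ → Submodule k A) [GradedAlgebra 𝒜] [CommRing R] [Algebra k R] :
    (∀ (φp φm : A →ₐ[k] Polynomial R) (ψ : A →ₐ[k] R),
      IsGradedToPoly 𝒜 φp → IsGradedToPolyNeg 𝒜 φm →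
      (evalOne k R).comp φp = ψ → (evalOne k R).comp φm = ψ →
      ∀ n : ℤ, n ≠ 0 → ∀ a ∈ 𝒜 n, ψ a = 0) ∧
    (∀ ψ : A →ₐ[k] R,
      (∃! p : (A →ₐ[k] Polynomial R) × (A →ₐ[k] Polynomial R),
        IsGradedToPoly 𝒜 p.1 ∧ IsGradedToPolyNeg 𝒜 p.2 ∧
        (evalOne k R).comp p.1 = ψ ∧ (evalOne k R).comp p.2 = ψ) ↔
      ∃! χ : (A ⧸ nonzeroDegIdeal 𝒜) →ₐ[k] R,
        χ.comp (Ideal.Quotient.mkₐ k (nonzeroDegIdeal 𝒜)) = ψ) := by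
  refine ⟨fun φp φm ψ hp hm hpψ hmψ n hn a ha =>
    evalOne_comp_eq_zero_of_ne_zero hp hm hpψ hmψ hn ha, fun ψ => ?_⟩
  rw [Ideal.Quotient.existsUnique_comp_mkₐ_iff, nonzeroDegIdeal_le_ker_iff]
  constructor
  · rintro ⟨⟨φp, φm⟩, ⟨hp, hm, hpψ, hmψ⟩, -⟩ n hn a ha
    exact evalOne_comp_eq_zero_of_ne_zero hp hm hpψ hmψ hn ha
  · intro hψ
    refine ⟨(constLift ψ, constLift ψ), ⟨isGradedToPoly_constLift hψ,
      isGradedToPolyNeg_constLift hψ, evalOne_comp_constLift ψ, evalOne_comp_constLift ψ⟩, ?_⟩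
    rintro ⟨φp, φm⟩ ⟨hp, hm, hpψ, hmψ⟩
    exact Prod.ext
      (eq_constLift_of_monomial rfl (fun _ _ => hp.exists_C_mul_X_pow) hpψ hψ)
      (eq_constLift_of_monomial rfl (fun _ _ => hm.exists_C_mul_X_pow) hmψ hψ)
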